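/- Let A : C × C → ℂ be the Levi-Civita connection matrix A(b,c) = δ_{b,c} − 1/3. Then: (i) Σ_{b∈C} A(b,c) = 0 for every c ∈ C (i.e. Σ_a A_a = 0), and consequently the quadratic part of the curvature vanishes identically: for each a ∈ C, Σ_{b,c,d∈C} [A(b,c)·A(a,d) + A(a,c)·A(b,d)]·(c,d) = 0 in V; (ii) Σ_{a,b∈C} (a,b) ∈ K (equivalently dθ = 0 for θ = E_u + E_v + E_w), so the curvature F_a of the Levi-Civita connection equals dE_a in Ω²; (iii) for each a ∈ C the vector Σ_{b∈C} [(a,b) + (b,a)] (the representative of dE_a) does not lie in K, so the curvature is nonzero. -/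
import Mathlib


/-! Setup for `S₃`: `u = (12)`, `v = (23)`, `w = uvu = (13)`, the conjugacy class
`C = {u,v,w}` of transpositions, the vector space `V` with basis
`{(a,b) : a,b ∈ C}` (functions `C × C → ℂ`), the braiding `Ψ(a,b) = (aba⁻¹, a)`
and `K = ker(id − Ψ)`.  A constant-coefficient 2-form `Σ λ_{a,b} E_a ∧ E_b`
vanishes iff `Σ λ_{a,b}(a,b) ∈ K`; `dE_a` has representative
`Σ_b [(a,b) + (b,a)]` and the curvature of a constant connection `A` is
`F_a = dA_a − Σ_b (A_b∧A_a + A_a∧A_b)`. -/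

def pu : Equiv.Perm (Fin 3) := Equiv.swap 0 1
def pv : Equiv.Perm (Fin 3) := Equiv.swap 1 2
def pw : Equiv.Perm (Fin 3) := pu * pv * pu

def C3 : Finset (Equiv.Perm (Fin 3)) := {pu, pv, pw}

lemma mem_conj3 : ∀ d c : {x // x ∈ C3},
    (d : Equiv.Perm (Fin 3))⁻¹ * c * d ∈ C3 := by decide

def bvec (a b : {x // x ∈ C3}) : {x // x ∈ C3} × {x // x ∈ C3} → ℂ :=
  fun p => if p = (a, b) then 1 else 0

noncomputable def Psi3 :
    ({x // x ∈ C3} × {x // x ∈ C3} → ℂ) →ₗ[ℂ] ({x // x ∈ C3} × {x // x ∈ C3} → ℂ) where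
  toFun f p := f (p.2, ⟨(p.2 : Equiv.Perm (Fin 3))⁻¹ * p.1 * p.2, mem_conj3 p.2 p.1⟩)
  map_add' _ _ := rfl
  map_smul' _ _ := rfl

noncomputable def K3 : Submodule ℂ ({x // x ∈ C3} × {x // x ∈ C3} → ℂ) :=
  LinearMap.ker (LinearMap.id - Psi3)

/-- The Levi-Civita connection matrix `A(b,c) = δ_{b,c} − 1/3`. -/
noncomputable def Alc (b c : {x // x ∈ C3}) : ℂ :=
  (if b = c then 1 else 0) - 1 / 3


lemma hu3 : pu ∈ C3 := by decide
lemma hv3 : pv ∈ C3 := by decide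
lemma hw3 : pw ∈ C3 := by decide

lemma univ3 : (Finset.univ : Finset {x // x ∈ C3}) =
    {⟨pu, hu3⟩, ⟨pv, hv3⟩, ⟨pw, hw3⟩} := by decide

lemma sum3 {M : Type*} [AddCommMonoid M] (f : {x // x ∈ C3} → M) :
    ∑ x : {x // x ∈ C3}, f x = f ⟨pu, hu3⟩ + f ⟨pv, hv3⟩ + f ⟨pw, hw3⟩ := by
  rw [univ3, Finset.sum_insert (by decide), Finset.sum_insert (by decide),
    Finset.sum_singleton, add_assoc]

lemma sumAlc (c : {x // x ∈ C3}) : ∑ b : {x // x ∈ C3}, Alc b c = 0 := by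
  obtain ⟨c, hc⟩ := c
  rw [sum3]
  fin_cases hc <;> simp [Alc, Subtype.ext_iff] <;>
    norm_num [show pu ≠ pv by decide, show pu ≠ pw by decide, show pv ≠ pw by decide,
      (show pu ≠ pv by decide).symm, (show pu ≠ pw by decide).symm,
      (show pv ≠ pw by decide).symm]

/-- For the Levi-Civita connection `A(b,c) = δ_{b,c} − 1/3` on `S₃`:
(i) `Σ_b A(b,c) = 0` (so `Σ_a A_a = 0`) and the quadratic part of the curvature
vanishes identically in `V`; (ii) `Σ_{a,b}(a,b) ∈ K` (i.e. `dθ = 0`, so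
`F_a = dE_a`); (iii) for each `a` the representative `Σ_b [(a,b)+(b,a)]` of
`dE_a` does not lie in `K`, so the curvature is nonzero. -/
theorem S3_levi_civita_curvature_facts :
    (∀ c : {x // x ∈ C3}, ∑ b : {x // x ∈ C3}, Alc b c = 0) ∧
    (∀ a : {x // x ∈ C3},
      (∑ b : {x // x ∈ C3}, ∑ c : {x // x ∈ C3}, ∑ d : {x // x ∈ C3},
        (Alc b c * Alc a d + Alc a c * Alc b d) • bvec c d) = 0) ∧
    (∑ a : {x // x ∈ C3}, ∑ b : {x // x ∈ C3}, bvec a b) ∈ K3 ∧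
    (∀ a : {x // x ∈ C3},
      (∑ b : {x // x ∈ C3}, (bvec a b + bvec b a)) ∉ K3) := by
  refine ⟨sumAlc, ?_, ?_, ?_⟩
  · intro a
    have key : ∀ c d : {x // x ∈ C3},
        ∑ b : {x // x ∈ C3}, (Alc b c * Alc a d + Alc a c * Alc b d) = 0 := by
      intro c d
      rw [Finset.sum_add_distrib, ← Finset.sum_mul, ← Finset.mul_sum, sumAlc,
        sumAlc, zero_mul, mul_zero, add_zero]
    calc (∑ b : {x // x ∈ C3}, ∑ c : {x // x ∈ C3}, ∑ d : {x // x ∈ C3},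
            (Alc b c * Alc a d + Alc a c * Alc b d) • bvec c d)
        = ∑ c : {x // x ∈ C3}, ∑ d : {x // x ∈ C3}, ∑ b : {x // x ∈ C3},
            (Alc b c * Alc a d + Alc a c * Alc b d) • bvec c d := by
          rw [Finset.sum_comm]
          exact Finset.sum_congr rfl fun c _ => Finset.sum_comm
      _ = 0 := by
          simp only [← Finset.sum_smul, key, zero_smul, Finset.sum_const_zero]
  · have hf : (∑ a : {x // x ∈ C3}, ∑ b : {x // x ∈ C3}, bvec a b)
        = fun _ => (1 : ℂ) := by
      funext p
      obtain ⟨⟨p1, h1⟩, ⟨p2, h2⟩⟩ := p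
      simp only [sum3, Pi.add_apply]
      fin_cases h1 <;> fin_cases h2 <;>
        simp (config := { decide := true }) [bvec, Prod.ext_iff, Subtype.ext_iff]
    rw [hf, K3, LinearMap.mem_ker]
    ext p
    simp [Psi3]
  · intro a h
    rw [K3, LinearMap.mem_ker] at h
    obtain ⟨a, ha⟩ := a
    rw [sum3] at h
    fin_cases ha
    · have h2 := congrFun h (⟨pu, hu3⟩, ⟨pv, hv3⟩)
      simp (config := { decide := true })
        [Psi3, bvec, Prod.ext_iff, Subtype.ext_iff] at h2
    · have h2 := congrFun h (⟨pv, hv3⟩, ⟨pu, hu3⟩)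
      simp (config := { decide := true })
        [Psi3, bvec, Prod.ext_iff, Subtype.ext_iff] at h2
    · have h2 := congrFun h (⟨pw, hw3⟩, ⟨pu, hu3⟩)
      simp (config := { decide := true })
        [Psi3, bvec, Prod.ext_iff, Subtype.ext_iff] at h2
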